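/- arXiv:2508.05831 — 6 statements merged into one kernel-verified Lean document; each statement's English description precedes it below -/
import Mathlib

section
/- Let A ∈ ℝ^{m×n}, B ∈ ℝ^{m×p}, and C ∈ ℝ^{q×n}. Let P_B = B B† and P_C = C† C denote the orthogonal projections onto the column space of B and the row space of C, respectively. Suppose M ∈ ℝ^{m×n} is a best rank-≤r approximation of P_B A P_C in the Frobenius norm (i.e., rank(M) ≤ r and ‖P_B A P_C − M‖_F ≤ ‖P_B A P_C − N‖_F for every N with rank(N) ≤ r). Then the matrix W = B† M C† satisfies rank(W) ≤ r and ‖A − B W C‖_F ≤ ‖A − B V C‖_F for every V ∈ ℝ^{p×q} with rank(V) ≤ r. -/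
open Matrix

/-- Frobenius norm of a real matrix. -/
noncomputable def frob {m n : ℕ} (A : Matrix (Fin m) (Fin n) ℝ) : ℝ :=
  Real.sqrt (∑ i, ∑ j, (A i j) ^ 2)

/-- `Ad` is the Moore–Penrose pseudoinverse of `A` (the four Penrose conditions). -/
def IsMoorePenrose {m n : ℕ} (A : Matrix (Fin m) (Fin n) ℝ)
    (Ad : Matrix (Fin n) (Fin m) ℝ) : Prop :=
  A * Ad * A = A ∧ Ad * A * Ad = Ad ∧ (A * Ad)ᵀ = A * Ad ∧ (Ad * A)ᵀ = Ad * A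

namespace FTaux

/-- squared Frobenius norm -/
noncomputable def sq {m n : ℕ} (X : Matrix (Fin m) (Fin n) ℝ) : ℝ :=
  ∑ i, ∑ j, (X i j) ^ 2

/-- Frobenius inner product -/
noncomputable def minner {m n : ℕ} (X Y : Matrix (Fin m) (Fin n) ℝ) : ℝ :=
  ∑ i, ∑ j, X i j * Y i j

lemma frob_eq {m n : ℕ} (X : Matrix (Fin m) (Fin n) ℝ) : frob X = Real.sqrt (sq X) := rfl

lemma sq_nonneg' {m n : ℕ} (X : Matrix (Fin m) (Fin n) ℝ) : 0 ≤ sq X := by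
  apply Finset.sum_nonneg; intro i _
  apply Finset.sum_nonneg; intro j _
  positivity

lemma minner_zero_right {m n : ℕ} (X : Matrix (Fin m) (Fin n) ℝ) : minner X (0 : Matrix (Fin m) (Fin n) ℝ) = 0 := by
  simp [minner]

lemma sq_add {m n : ℕ} (X Y : Matrix (Fin m) (Fin n) ℝ) :
    sq (X + Y) = sq X + 2 * minner X Y + sq Y := by
  have h : ∀ a b : ℝ, (a + b) ^ 2 = a ^ 2 + 2 * (a * b) + b ^ 2 := by intros; ring
  simp only [sq, minner, Matrix.add_apply, h, Finset.sum_add_distrib, Finset.mul_sum]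

lemma minner_trace {m n : ℕ} (X Y : Matrix (Fin m) (Fin n) ℝ) :
    minner X Y = Matrix.trace (Xᵀ * Y) := by
  simp only [Matrix.trace, Matrix.diag, Matrix.mul_apply, Matrix.transpose_apply, minner]
  rw [Finset.sum_comm]

lemma minner_adjoint {m n : ℕ} (P : Matrix (Fin m) (Fin m) ℝ) (Q : Matrix (Fin n) (Fin n) ℝ)
    (X Z : Matrix (Fin m) (Fin n) ℝ) :
    minner (P * X * Q) Z = minner X (Pᵀ * Z * Qᵀ) := by
  rw [minner_trace, minner_trace, Matrix.transpose_mul, Matrix.transpose_mul,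
    Matrix.mul_assoc, Matrix.trace_mul_comm]
  simp [Matrix.mul_assoc]

lemma frob_le_frob {m n : ℕ} {X Y : Matrix (Fin m) (Fin n) ℝ} (h : sq X ≤ sq Y) :
    frob X ≤ frob Y := by
  rw [frob_eq, frob_eq]; exact Real.sqrt_le_sqrt h

lemma sq_le_of_frob_le {m n : ℕ} {X Y : Matrix (Fin m) (Fin n) ℝ} (h : frob X ≤ frob Y) :
    sq X ≤ sq Y := by
  have hx := sq_nonneg' X
  have hy := sq_nonneg' Y
  have h2 : frob X ^ 2 ≤ frob Y ^ 2 := pow_le_pow_left₀ (Real.sqrt_nonneg _) h 2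
  rwa [frob_eq, frob_eq, Real.sq_sqrt hx, Real.sq_sqrt hy] at h2

/-- Pythagoras: if the matrices are orthogonal. -/
lemma sq_add_of_orth {m n : ℕ} {X Y : Matrix (Fin m) (Fin n) ℝ} (h : minner X Y = 0) :
    sq (X + Y) = sq X + sq Y := by
  rw [sq_add, h]; ring

end FTaux

open FTaux in
/-- Generalized rank-constrained matrix approximation (Friedland–Torokhti):
`W = B† M C†` solves `min ‖A − B V C‖_F` over `rank(V) ≤ r`, where `M` is a best
rank-`≤ r` approximation of `B B† A C† C`. -/
theorem friedland_torokhti_optimality {m n p q : ℕ} (r : ℕ)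
    (A : Matrix (Fin m) (Fin n) ℝ) (B : Matrix (Fin m) (Fin p) ℝ)
    (C : Matrix (Fin q) (Fin n) ℝ)
    (Bd : Matrix (Fin p) (Fin m) ℝ) (hB : IsMoorePenrose B Bd)
    (Cd : Matrix (Fin n) (Fin q) ℝ) (hC : IsMoorePenrose C Cd)
    (M : Matrix (Fin m) (Fin n) ℝ)
    (hMrank : M.rank ≤ r)
    (hMbest : ∀ N : Matrix (Fin m) (Fin n) ℝ, N.rank ≤ r →
      frob (B * Bd * A * (Cd * C) - M) ≤ frob (B * Bd * A * (Cd * C) - N)) :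
    (Bd * M * Cd).rank ≤ r ∧
      ∀ V : Matrix (Fin p) (Fin q) ℝ, V.rank ≤ r →
        frob (A - B * (Bd * M * Cd) * C) ≤ frob (A - B * V * C) := by
  obtain ⟨hB1, hB2, hB3, hB4⟩ := hB
  obtain ⟨hC1, hC2, hC3, hC4⟩ := hC
  constructor
  · exact le_trans (le_trans (Matrix.rank_mul_le_left _ _) (Matrix.rank_mul_le_right _ _)) hMrank
  intro V hV
  set P : Matrix (Fin m) (Fin m) ℝ := B * Bd with hPdef
  set Q : Matrix (Fin n) (Fin n) ℝ := Cd * C with hQdef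
  -- right-associated rewriting lemmas
  have hB1r : ∀ {k : ℕ} (X : Matrix (Fin p) (Fin k) ℝ), B * (Bd * (B * X)) = B * X := by
    intro k X
    rw [← Matrix.mul_assoc, ← Matrix.mul_assoc, hB1]
  have hC1r : C * (Cd * C) = C := by rw [← Matrix.mul_assoc, hC1]
  have hPt : Pᵀ = P := hB3
  have hQt : Qᵀ = Q := hC4
  -- P X Q absorbs P on left and Q on right
  have habsorb : ∀ (X : Matrix (Fin m) (Fin n) ℝ), P * (P * X * Q) * Q = P * X * Q := by
    intro X
    simp only [hPdef, hQdef, Matrix.mul_assoc, hB1r, hC1r]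
  have hBVC : ∀ (V : Matrix (Fin p) (Fin q) ℝ), P * (B * V * C) * Q = B * V * C := by
    intro V
    simp only [hPdef, hQdef, Matrix.mul_assoc, hB1r, hC1r]
  have hBWC : B * (Bd * M * Cd) * C = P * M * Q := by
    simp only [hPdef, hQdef, Matrix.mul_assoc]
  -- D := A - P A Q is orthogonal to everything of the form P * X * Q
  have hD0 : P * (A - P * A * Q) * Q = 0 := by
    rw [Matrix.mul_sub, Matrix.sub_mul, habsorb, sub_self]
  have horth : ∀ (X : Matrix (Fin m) (Fin n) ℝ),
      minner (A - P * A * Q) (P * X * Q) = 0 := by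
    intro X
    have h1 : minner (P * X * Q) (A - P * A * Q) = 0 := by
      rw [minner_adjoint, hPt, hQt, hD0, minner_zero_right]
    have hcomm : minner (A - P * A * Q) (P * X * Q) = minner (P * X * Q) (A - P * A * Q) := by
      simp only [minner, mul_comm]
    rw [hcomm, h1]
  -- key decomposition: sq (A - Z) splits when Z = P Z Q
  have hsplit : ∀ (Z : Matrix (Fin m) (Fin n) ℝ), (P * Z * Q = Z) →
      sq (A - Z) = sq (A - P * A * Q) + sq (P * A * Q - Z) := by
    intro Z hZ
    have hform : P * A * Q - Z = P * (A - Z) * Q := by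
      rw [Matrix.mul_sub, Matrix.sub_mul, hZ]
    have heq : A - Z = (A - P * A * Q) + (P * A * Q - Z) := by abel
    rw [heq, sq_add_of_orth (by rw [hform]; exact horth _)]
  -- contraction: projecting decreases the squared Frobenius norm
  have hcontr : ∀ (Y : Matrix (Fin m) (Fin n) ℝ), sq (P * Y * Q) ≤ sq Y := by
    intro Y
    have h0 : P * (Y - P * Y * Q) * Q = 0 := by
      rw [Matrix.mul_sub, Matrix.sub_mul, habsorb, sub_self]
    have horth2 : minner (P * Y * Q) (Y - P * Y * Q) = 0 := by
      rw [minner_adjoint, hPt, hQt, h0, minner_zero_right]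
    have hYsq : sq Y = sq (P * Y * Q) + sq (Y - P * Y * Q) := by
      conv_lhs => rw [show Y = P * Y * Q + (Y - P * Y * Q) by abel]
      exact sq_add_of_orth horth2
    linarith [sq_nonneg' (Y - P * Y * Q)]
  -- rank of B V C
  have hrankBVC : (B * V * C).rank ≤ r :=
    le_trans (le_trans (Matrix.rank_mul_le_left _ _) (Matrix.rank_mul_le_right _ _)) hV
  -- main chain
  have h1 : sq (A - B * (Bd * M * Cd) * C)
      = sq (A - P * A * Q) + sq (P * A * Q - P * M * Q) := by
    rw [hBWC]; exact hsplit _ (habsorb M)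
  have h2 : sq (A - B * V * C)
      = sq (A - P * A * Q) + sq (P * A * Q - B * V * C) := hsplit _ (hBVC V)
  have h3 : P * A * Q - P * M * Q = P * (P * A * Q - M) * Q := by
    rw [Matrix.mul_sub, Matrix.sub_mul, habsorb]
  have h4 : sq (P * A * Q - P * M * Q) ≤ sq (P * A * Q - M) := by
    rw [h3]; exact hcontr _
  have h5 : sq (P * A * Q - M) ≤ sq (P * A * Q - B * V * C) :=
    sq_le_of_frob_le (hMbest (B * V * C) hrankBVC)
  apply frob_le_frob
  rw [h1, h2]
  linarith
end

section
/- Let X : Ω → ℝⁿ and ε : Ω → ℝᵐ be square-integrable random vectors on a probability space, with X and ε independent and E[ε] = 0. Let F ∈ ℝ^{m×n}, set Y = F X + ε, and let Γ_X = E[X Xᵀ] and Γ_Y = E[Y Yᵀ]. Suppose L_X is a matrix with Γ_X = L_X L_Xᵀ. Then for every A ∈ ℝ^{m×n}, E‖A X − Y‖₂² = ‖A L_X − F L_X‖_F² − ‖F L_X‖_F² + tr(Γ_Y). -/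
/-!
With `B = A - F` and `η = -ε` the residual is `B X + η`, and everything reduces to
`E‖B X + η‖² = tr(B Γ_X Bᵀ) + tr Γ_η` for `η` independent of `X` with `E[η] = 0`:
independence factors the cross moment `E[(B X) ηᵀ]` as `E[B X] E[η]ᵀ = 0`.
Using this for `(A - F, -ε)` and for `(F, ε)`, and `tr(B L Lᵀ Bᵀ) = ‖B L‖_F²`,
the two noise terms `tr Γ_ε` cancel.
-/

open Matrix MeasureTheory

/-- Second (cross-)moment matrix `E[X Yᵀ]` of two random vectors. -/
noncomputable def secondMoment {Ω : Type} [MeasurableSpace Ω] (μ : Measure Ω)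
    {n m : ℕ} (X : Ω → Fin n → ℝ) (Y : Ω → Fin m → ℝ) : Matrix (Fin n) (Fin m) ℝ :=
  Matrix.of fun i j => ∫ ω, X ω i * Y ω j ∂μ

open ProbabilityTheory

lemma Matrix.measurable_mulVec {ι κ : Type*} [Fintype ι] [Fintype κ] (B : Matrix ι κ ℝ) :
    Measurable fun v : κ → ℝ => B *ᵥ v :=
  (Matrix.mulVecLin B).continuous_of_finiteDimensional.measurable

lemma MeasureTheory.MemLp.mulVec {Ω ι κ : Type*} [MeasurableSpace Ω] {μ : Measure Ω}
    [Fintype ι] [Fintype κ] {p : ENNReal} {X : Ω → κ → ℝ} (hX : MemLp X p μ)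
    (B : Matrix ι κ ℝ) : MemLp (fun ω => B *ᵥ X ω) p μ :=
  (Matrix.mulVecLin B).toContinuousLinearMap.comp_memLp' hX

lemma frob_sq_eq_trace {m n : ℕ} (A : Matrix (Fin m) (Fin n) ℝ) :
    frob A ^ 2 = trace (A * Aᵀ) := by
  rw [frob, Real.sq_sqrt (by positivity)]
  simp [trace, mul_apply, sq]

section SecondMoment

variable {Ω : Type} [MeasurableSpace Ω] {μ : Measure Ω} {n m p q : ℕ}

lemma trace_secondMoment_self {Y : Ω → Fin n → ℝ} (hY : MemLp Y 2 μ) :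
    trace (secondMoment μ Y Y) = ∫ ω, ∑ i, Y ω i ^ 2 ∂μ := by
  rw [integral_finsetSum _ fun i _ => (hY.eval i).integrable_sq]
  simp [trace, secondMoment, sq]

lemma secondMoment_neg (X : Ω → Fin n → ℝ) (Y : Ω → Fin m → ℝ) :
    secondMoment μ (fun ω => -X ω) (fun ω => -Y ω) = secondMoment μ X Y := by
  simp [secondMoment]

lemma secondMoment_add_add {X Z : Ω → Fin n → ℝ} {Y W : Ω → Fin m → ℝ}
    (hX : MemLp X 2 μ) (hZ : MemLp Z 2 μ) (hY : MemLp Y 2 μ) (hW : MemLp W 2 μ) :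
    secondMoment μ (fun ω => X ω + Z ω) (fun ω => Y ω + W ω)
      = secondMoment μ X Y + secondMoment μ X W + secondMoment μ Z Y + secondMoment μ Z W := by
  ext i j
  have hint {U : Ω → Fin n → ℝ} {V : Ω → Fin m → ℝ} (hU : MemLp U 2 μ) (hV : MemLp V 2 μ) :
      Integrable (fun ω => U ω i * V ω j) μ :=
    (hU.eval i).integrable_mul (hV.eval j)
  simp only [secondMoment, Matrix.add_apply, of_apply]
  calc ∫ ω, (X ω + Z ω) i * (Y ω + W ω) j ∂μ
      = ∫ ω, (X ω i * Y ω j + X ω i * W ω j) + (Z ω i * Y ω j + Z ω i * W ω j) ∂μ := by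
        congr with ω
        simp only [Pi.add_apply]
        ring
    _ = _ := by
        rw [integral_add ((hint hX hY).fun_add (hint hX hW)) ((hint hZ hY).fun_add (hint hZ hW)),
          integral_add (hint hX hY) (hint hX hW), integral_add (hint hZ hY) (hint hZ hW)]
        ring

lemma secondMoment_eq_vecMulVec_of_indepFun [IsFiniteMeasure μ]
    {X : Ω → Fin n → ℝ} {Y : Ω → Fin m → ℝ}
    (hX : MemLp X 2 μ) (hY : MemLp Y 2 μ) (hXY : IndepFun X Y μ) :
    secondMoment μ X Y = vecMulVec (∫ ω, X ω ∂μ) (∫ ω, Y ω ∂μ) := by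
  ext i j
  have hXiYj : IndepFun (fun ω => X ω i) (fun ω => Y ω j) μ :=
    hXY.comp (measurable_pi_apply i) (measurable_pi_apply j)
  rw [secondMoment, of_apply, hXiYj.integral_fun_mul_eq_mul_integral (hX.eval i).1 (hY.eval j).1,
    vecMulVec_apply, eval_integral (fun i => (hX.eval i).integrable one_le_two),
    eval_integral (fun j => (hY.eval j).integrable one_le_two)]

lemma secondMoment_add_of_indepFun [IsFiniteMeasure μ] {U η : Ω → Fin n → ℝ}
    (hU : MemLp U 2 μ) (hη : MemLp η 2 μ) (hUη : IndepFun U η μ) (hη0 : ∫ ω, η ω ∂μ = 0) :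
    secondMoment μ (fun ω => U ω + η ω) (fun ω => U ω + η ω)
      = secondMoment μ U U + secondMoment μ η η := by
  rw [secondMoment_add_add hU hη hU hη, secondMoment_eq_vecMulVec_of_indepFun hU hη hUη,
    secondMoment_eq_vecMulVec_of_indepFun hη hU hUη.symm, hη0, vecMulVec_zero, zero_vecMulVec]
  abel

lemma secondMoment_mulVec {X : Ω → Fin n → ℝ} {Y : Ω → Fin m → ℝ}
    (hX : MemLp X 2 μ) (hY : MemLp Y 2 μ) (B : Matrix (Fin p) (Fin n) ℝ)
    (C : Matrix (Fin q) (Fin m) ℝ) :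
    secondMoment μ (fun ω => B *ᵥ X ω) (fun ω => C *ᵥ Y ω) = B * secondMoment μ X Y * Cᵀ := by
  ext i j
  have hint (k : Fin n) (l : Fin m) : Integrable (fun ω => B i k * C j l * (X ω k * Y ω l)) μ :=
    ((hX.eval k).integrable_mul (hY.eval l)).const_mul _
  calc ∫ ω, (B *ᵥ X ω) i * (C *ᵥ Y ω) j ∂μ
      = ∫ ω, ∑ k, ∑ l, B i k * C j l * (X ω k * Y ω l) ∂μ := by
        congr with ω
        simp only [mulVec, dotProduct, Finset.sum_mul_sum]
        exact Finset.sum_congr rfl fun k _ => Finset.sum_congr rfl fun l _ => by ring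
    _ = ∑ k, ∑ l, B i k * C j l * ∫ ω, X ω k * Y ω l ∂μ := by
        rw [integral_finsetSum _ fun k _ => integrable_finsetSum _ fun l _ => hint k l]
        refine Finset.sum_congr rfl fun k _ => ?_
        rw [integral_finsetSum _ fun l _ => hint k l]
        simp only [integral_const_mul]
    _ = (B * secondMoment μ X Y * Cᵀ) i j := by
        simp only [mul_apply, transpose_apply, secondMoment, of_apply, Finset.sum_mul]
        rw [Finset.sum_comm]
        exact Finset.sum_congr rfl fun k _ => Finset.sum_congr rfl fun l _ => by ring

lemma trace_secondMoment_mulVec_add [IsFiniteMeasure μ] {X : Ω → Fin n → ℝ} {η : Ω → Fin m → ℝ}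
    (hX : MemLp X 2 μ) (hη : MemLp η 2 μ) (hXη : IndepFun X η μ) (hη0 : ∫ ω, η ω ∂μ = 0)
    (B : Matrix (Fin m) (Fin n) ℝ) :
    trace (secondMoment μ (fun ω => B *ᵥ X ω + η ω) (fun ω => B *ᵥ X ω + η ω))
      = trace (B * secondMoment μ X X * Bᵀ) + trace (secondMoment μ η η) := by
  rw [secondMoment_add_of_indepFun (hX.mulVec B) hη (hXη.comp (measurable_mulVec B) measurable_id)
    hη0, secondMoment_mulVec hX hX, trace_add]

end SecondMoment

/-- Completed-square Bayes risk expansion: for `Y = F X + ε` with `X ⫫ ε`, `E[ε] = 0`,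
and `Γ_X = L_X L_Xᵀ`, one has
`E‖A X − Y‖₂² = ‖A L_X − F L_X‖_F² − ‖F L_X‖_F² + tr(Γ_Y)`. -/
theorem bayes_risk_completed_square {Ω : Type} [MeasurableSpace Ω]
    (μ : Measure Ω) [IsProbabilityMeasure μ] {n m k : ℕ}
    (X : Ω → Fin n → ℝ) (ε : Ω → Fin m → ℝ)
    (hX : MemLp X 2 μ) (hε : MemLp ε 2 μ)
    (hindep : ProbabilityTheory.IndepFun X ε μ)
    (hmean : (∫ ω, ε ω ∂μ) = 0)
    (F : Matrix (Fin m) (Fin n) ℝ)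
    (LX : Matrix (Fin n) (Fin k) ℝ) (hLX : secondMoment μ X X = LX * LXᵀ)
    (A : Matrix (Fin m) (Fin n) ℝ) :
    ∫ ω, ∑ i, (A *ᵥ X ω - (F *ᵥ X ω + ε ω)) i ^ 2 ∂μ
      = frob (A * LX - F * LX) ^ 2 - frob (F * LX) ^ 2
          + Matrix.trace
              (secondMoment μ (fun ω => F *ᵥ X ω + ε ω) (fun ω => F *ᵥ X ω + ε ω)) := by
  have hfrob (B : Matrix (Fin m) (Fin n) ℝ) :
      trace (B * secondMoment μ X X * Bᵀ) = frob (B * LX) ^ 2 := by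
    rw [frob_sq_eq_trace, hLX, transpose_mul]
    simp only [Matrix.mul_assoc]
  have hresidual (ω : Ω) : A *ᵥ X ω - (F *ᵥ X ω + ε ω) = (A - F) *ᵥ X ω + -ε ω := by
    rw [sub_mulVec]
    abel
  have hmean_neg : ∫ ω, -ε ω ∂μ = 0 := by rw [integral_neg, hmean, neg_zero]
  calc ∫ ω, ∑ i, (A *ᵥ X ω - (F *ᵥ X ω + ε ω)) i ^ 2 ∂μ
      = trace (secondMoment μ (fun ω => (A - F) *ᵥ X ω + -ε ω)
          (fun ω => (A - F) *ᵥ X ω + -ε ω)) := by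
        have hresidual_memLp : MemLp (fun ω => (A - F) *ᵥ X ω + -ε ω) 2 μ :=
          (hX.mulVec (A - F)).add hε.neg
        simp only [hresidual, trace_secondMoment_self hresidual_memLp]
    _ = frob ((A - F) * LX) ^ 2 + trace (secondMoment μ ε ε) := by
        rw [trace_secondMoment_mulVec_add (η := fun ω => -ε ω) hX hε.neg
          (hindep.comp measurable_id measurable_neg) hmean_neg, secondMoment_neg, hfrob]
    _ = _ := by
        rw [trace_secondMoment_mulVec_add hX hε hindep hmean, hfrob, Matrix.sub_mul]
        ring
end

section
/- Let X : Ω → ℝⁿ and ε : Ω → ℝᵐ be square-integrable random vectors on a probability space, with X and ε independent and E[ε] = 0. Let F ∈ ℝ^{m×n}, set Y = F X + ε, and let L_X be a matrix with E[X Xᵀ] = L_X L_Xᵀ. Then the matrix Â = F L_X L_X† attains the global minimum of the Bayes risk: for every A ∈ ℝ^{m×n}, E‖Â X − Y‖₂² ≤ E‖A X − Y‖₂². -/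
/-!
Write `B = A - F`, so that the error is `B X - ε`. Independence and `E ε = 0` kill the cross
term, hence the risk of `A` is `E‖ε‖² + ∑ᵢ Bᵢ Γ_X Bᵢᵀ = E‖ε‖² + ‖B L_X‖_F²`. The noise term does
not depend on `A`, and for `Â` the Penrose identity `L_X L_X† L_X = L_X` gives
`(Â - F) L_X = 0`, so `Â` attains the lower bound `E‖ε‖²`.
-/

open Matrix MeasureTheory ProbabilityTheory

theorem dotProduct_mul_transpose_mulVec {ι κ R : Type*} [Fintype ι] [Fintype κ] [CommSemiring R]
    (L : Matrix ι κ R) (v : ι → R) : v ⬝ᵥ ((L * Lᵀ) *ᵥ v) = (v ᵥ* L) ⬝ᵥ (v ᵥ* L) := by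
  rw [← mulVec_mulVec, dotProduct_mulVec, mulVec_transpose]

theorem IsMoorePenrose.mul_mul_sub_mul_eq_zero {m n p : ℕ} {L : Matrix (Fin m) (Fin n) ℝ}
    {Ld : Matrix (Fin n) (Fin m) ℝ} (h : IsMoorePenrose L Ld) (F : Matrix (Fin p) (Fin m) ℝ) :
    (F * L * Ld - F) * L = 0 := by
  rw [Matrix.sub_mul, Matrix.mul_assoc, Matrix.mul_assoc, ← Matrix.mul_assoc L, h.1, sub_self]

section

variable {Ω : Type} [MeasurableSpace Ω] {μ : Measure Ω}

theorem MeasureTheory.MemLp.const_dotProduct {ι : Type*} [Fintype ι] {p : ENNReal}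
    {Z : Ω → ι → ℝ} (hZ : MemLp Z p μ) (v : ι → ℝ) : MemLp (fun ω => v ⬝ᵥ Z ω) p μ :=
  memLp_finsetSum Finset.univ fun j _ => (hZ.eval j).const_mul (v j)

theorem integral_sub_sq_of_indepFun {f g : Ω → ℝ} (hf : MemLp f 2 μ) (hg : MemLp g 2 μ)
    (hfg : IndepFun f g μ) (hg0 : ∫ ω, g ω ∂μ = 0) :
    ∫ ω, (f ω - g ω) ^ 2 ∂μ = ∫ ω, f ω ^ 2 ∂μ + ∫ ω, g ω ^ 2 ∂μ := by
  have hfg_int : Integrable (fun ω => f ω * g ω) μ := hf.integrable_mul hg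
  have hcross : ∫ ω, f ω * g ω ∂μ = 0 := by
    rw [hfg.integral_fun_mul_eq_mul_integral hf.1 hg.1, hg0, mul_zero]
  have hexpand : (fun ω => (f ω - g ω) ^ 2) = fun ω => f ω ^ 2 - 2 * (f ω * g ω) + g ω ^ 2 := by
    funext ω; ring
  have hf_sq : Integrable (fun ω => f ω ^ 2) μ := hf.integrable_sq
  have hcross_int : Integrable (fun ω => 2 * (f ω * g ω)) μ := hfg_int.const_mul 2
  have hdiff_int : Integrable (fun ω => f ω ^ 2 - 2 * (f ω * g ω)) μ := hf_sq.sub hcross_int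
  rw [hexpand, integral_add hdiff_int hg.integrable_sq, integral_sub hf_sq hcross_int,
    integral_const_mul, hcross, mul_zero, sub_zero]

theorem integral_dotProduct_sq {n : ℕ} {Z : Ω → Fin n → ℝ} (hZ : MemLp Z 2 μ) (v : Fin n → ℝ) :
    ∫ ω, (v ⬝ᵥ Z ω) ^ 2 ∂μ = v ⬝ᵥ (secondMoment μ Z Z *ᵥ v) := by
  have hint : ∀ j l, Integrable (fun ω => v j * v l * (Z ω j * Z ω l)) μ := fun j l =>
    ((hZ.eval j).integrable_mul (hZ.eval l)).const_mul _
  have hexpand : (fun ω => (v ⬝ᵥ Z ω) ^ 2)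
      = fun ω => ∑ j, ∑ l, v j * v l * (Z ω j * Z ω l) := by
    funext ω
    simp only [dotProduct, sq, Finset.sum_mul_sum]
    exact Finset.sum_congr rfl fun j _ => Finset.sum_congr rfl fun l _ => by ring
  rw [hexpand, integral_finsetSum _ fun j _ => integrable_finsetSum _ fun l _ => hint j l]
  simp only [dotProduct, mulVec, secondMoment, of_apply, Finset.mul_sum]
  refine Finset.sum_congr rfl fun j _ => ?_
  rw [integral_finsetSum _ fun l _ => hint j l]
  refine Finset.sum_congr rfl fun l _ => ?_
  rw [integral_const_mul]
  ring

theorem integral_sum_sq_mulVec_sub_of_indepFun [IsFiniteMeasure μ] {n m : ℕ}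
    {X : Ω → Fin n → ℝ} {ε : Ω → Fin m → ℝ} (hX : MemLp X 2 μ) (hε : MemLp ε 2 μ)
    (hindep : IndepFun X ε μ) (hmean : ∫ ω, ε ω ∂μ = 0) (B : Matrix (Fin m) (Fin n) ℝ) :
    ∫ ω, ∑ i, (B *ᵥ X ω - ε ω) i ^ 2 ∂μ
      = ∑ i, B i ⬝ᵥ (secondMoment μ X X *ᵥ B i) + ∫ ω, ∑ i, ε ω i ^ 2 ∂μ := by
  have hεi : ∀ i, MemLp (fun ω => ε ω i) 2 μ := hε.eval
  have hBX : ∀ i, MemLp (fun ω => B i ⬝ᵥ X ω) 2 μ := fun i => hX.const_dotProduct (B i)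
  have hrow : ∀ i, ∫ ω, (B *ᵥ X ω - ε ω) i ^ 2 ∂μ
      = B i ⬝ᵥ (secondMoment μ X X *ᵥ B i) + ∫ ω, ε ω i ^ 2 ∂μ := by
    intro i
    have hindep_i : IndepFun (fun ω => B i ⬝ᵥ X ω) (fun ω => ε ω i) μ :=
      hindep.comp (φ := fun x => B i ⬝ᵥ x) (ψ := fun e : Fin m → ℝ => e i) (by fun_prop)
        (measurable_pi_apply i)
    have hmean_i : ∫ ω, ε ω i ∂μ = 0 := by
      rw [← eval_integral (fun j => (hε.eval j).integrable one_le_two), hmean, Pi.zero_apply]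
    rw [← integral_dotProduct_sq hX]
    exact integral_sub_sq_of_indepFun (hBX i) (hεi i) hindep_i hmean_i
  have hint : ∀ i, Integrable (fun ω => (B *ᵥ X ω - ε ω) i ^ 2) μ := fun i =>
    ((hBX i).sub (hεi i)).integrable_sq
  rw [integral_finsetSum _ fun i _ => hint i,
    integral_finsetSum _ fun i _ => (hεi i).integrable_sq, ← Finset.sum_add_distrib]
  exact Finset.sum_congr rfl fun i _ => hrow i

end

/-- The projected forward operator `Â = F L_X L_X†` attains the global minimum of the
Bayes risk `E‖A X − Y‖₂²` over all (unconstrained) `A`. -/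
theorem forward_projection_optimal {Ω : Type} [MeasurableSpace Ω]
    (μ : Measure Ω) [IsProbabilityMeasure μ] {n m k : ℕ}
    (X : Ω → Fin n → ℝ) (ε : Ω → Fin m → ℝ)
    (hX : MemLp X 2 μ) (hε : MemLp ε 2 μ)
    (hindep : ProbabilityTheory.IndepFun X ε μ)
    (hmean : (∫ ω, ε ω ∂μ) = 0)
    (F : Matrix (Fin m) (Fin n) ℝ)
    (LX : Matrix (Fin n) (Fin k) ℝ) (hLX : secondMoment μ X X = LX * LXᵀ)
    (LXd : Matrix (Fin k) (Fin n) ℝ) (hLXd : IsMoorePenrose LX LXd) :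
    ∀ A : Matrix (Fin m) (Fin n) ℝ,
      ∫ ω, ∑ i, ((F * LX * LXd) *ᵥ X ω - (F *ᵥ X ω + ε ω)) i ^ 2 ∂μ
        ≤ ∫ ω, ∑ i, (A *ᵥ X ω - (F *ᵥ X ω + ε ω)) i ^ 2 ∂μ := by
  have risk : ∀ A : Matrix (Fin m) (Fin n) ℝ,
      ∫ ω, ∑ i, (A *ᵥ X ω - (F *ᵥ X ω + ε ω)) i ^ 2 ∂μ
        = ∑ i, ((A - F) * LX) i ⬝ᵥ ((A - F) * LX) i + ∫ ω, ∑ i, ε ω i ^ 2 ∂μ := by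
    intro A
    simp_rw [sub_add_eq_sub_sub, ← sub_mulVec]
    rw [integral_sum_sq_mulVec_sub_of_indepFun hX hε hindep hmean, hLX]
    simp_rw [dotProduct_mul_transpose_mulVec, ← mul_apply_eq_vecMul]
  have hrows : ∀ i, ((F * LX * LXd - F) * LX) i = 0 :=
    congrFun (hLXd.mul_mul_sub_mul_eq_zero F)
  intro A
  rw [risk, risk]
  simp only [hrows, zero_dotProduct, Finset.sum_const_zero, zero_add]
  have hnonneg : 0 ≤ ∑ i, ((A - F) * LX) i ⬝ᵥ ((A - F) * LX) i :=
    Finset.sum_nonneg fun i _ => by simpa using dotProduct_star_self_nonneg (((A - F) * LX) i)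
  linarith
end

section
/- Let X : Ω → ℝⁿ and ε : Ω → ℝᵐ be square-integrable random vectors on a probability space, with X and ε independent and E[ε] = 0. Let F ∈ ℝ^{m×n}, let μ_X = E[X], and let K_X be a matrix with Cov(X) = E[(X − μ_X)(X − μ_X)ᵀ] = K_X K_Xᵀ. Let M be a best rank-≤r approximation of F K_X in the Frobenius norm, set Â = M K_X† and b̂ = (F − Â) μ_X. Then rank(Â) ≤ r and for every A ∈ ℝ^{m×n} with rank(A) ≤ r and every b ∈ ℝᵐ, E‖Â X + b̂ − (F X + ε)‖₂² ≤ E‖A X + b − (F X + ε)‖₂². -/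
open Matrix MeasureTheory

/-- Covariance matrix `E[(X − E X)(X − E X)ᵀ]` of a random vector. -/
noncomputable def covMatrix {Ω : Type} [MeasurableSpace Ω] (μ : Measure Ω)
    {n : ℕ} (X : Ω → Fin n → ℝ) : Matrix (Fin n) (Fin n) ℝ :=
  Matrix.of fun i j =>
    ∫ ω, (X ω i - ∫ ω', X ω' i ∂μ) * (X ω j - ∫ ω', X ω' j ∂μ) ∂μ

/-!
Bias–variance decomposition: for noise independent of `X` with mean zero,
`E‖A X + b − (F X + ε)‖² = ‖(A − F) K_X‖_F² + ‖(A − F) μ_X + b‖² + E‖ε‖²`.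
The choice of `b̂` kills the middle term, and `(Â − F) K_X = (M − F K_X) (K_X† K_X)` where
`K_X† K_X` is an orthogonal projection, so `‖(Â − F) K_X‖_F ≤ ‖F K_X − M‖_F ≤ ‖F K_X − A K_X‖_F`.
-/

open ProbabilityTheory

section Frobenius

variable {m n : ℕ}

lemma frob_nonneg (A : Matrix (Fin m) (Fin n) ℝ) : 0 ≤ frob A := Real.sqrt_nonneg _

lemma frob_sq (A : Matrix (Fin m) (Fin n) ℝ) : frob A ^ 2 = trace (A * Aᵀ) := by
  rw [frob, Real.sq_sqrt (by positivity)]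
  simp [trace, mul_apply, sq]

lemma frob_mul_sq {k : ℕ} (G : Matrix (Fin m) (Fin n) ℝ) (K : Matrix (Fin n) (Fin k) ℝ) :
    frob (G * K) ^ 2 = trace (G * (K * Kᵀ) * Gᵀ) := by
  rw [frob_sq, transpose_mul, Matrix.mul_assoc, Matrix.mul_assoc, Matrix.mul_assoc]

lemma frob_neg (A : Matrix (Fin m) (Fin n) ℝ) : frob (-A) = frob A := by
  simp [frob]

lemma frob_mul_le_of_isSymm_of_idempotent (N : Matrix (Fin m) (Fin n) ℝ)
    {P : Matrix (Fin n) (Fin n) ℝ} (hP : P * P = P) (hPt : Pᵀ = P) :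
    frob (N * P) ≤ frob N := by
  have hNP : N * P * (N * P)ᵀ = N * P * Nᵀ := by
    rw [transpose_mul, hPt, ← Matrix.mul_assoc, Matrix.mul_assoc N P P, hP]
  have hsplit : N * Nᵀ = N * P * (N * P)ᵀ + (N - N * P) * (N - N * P)ᵀ := by
    rw [transpose_sub, Matrix.sub_mul, Matrix.mul_sub, Matrix.mul_sub, hNP,
      transpose_mul, hPt, ← Matrix.mul_assoc]
    abel
  rw [← pow_le_pow_iff_left₀ (frob_nonneg _) (frob_nonneg _) two_ne_zero, frob_sq, frob_sq,
    hsplit, trace_add, le_add_iff_nonneg_right, ← frob_sq]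
  positivity

end Frobenius

section Moments

variable {Ω : Type} [MeasurableSpace Ω] {μ : Measure Ω}

lemma ProbabilityTheory.IndepFun.integral_sub_sq_eq_add {U E : Ω → ℝ} (hUE : U ⟂ᵢ[μ] E)
    (hU : MemLp U 2 μ) (hE : MemLp E 2 μ) (hE0 : ∫ ω, E ω ∂μ = 0) :
    ∫ ω, (U ω - E ω) ^ 2 ∂μ = ∫ ω, U ω ^ 2 ∂μ + ∫ ω, E ω ^ 2 ∂μ := by
  have hcross : ∫ ω, U ω * E ω ∂μ = 0 := by
    rw [hUE.integral_fun_mul_eq_mul_integral hU.aestronglyMeasurable hE.aestronglyMeasurable,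
      hE0, mul_zero]
  have hsq : Integrable (fun ω => U ω ^ 2 + E ω ^ 2) μ := hU.integrable_sq.add hE.integrable_sq
  have hUE_int : Integrable (fun ω => U ω * E ω) μ := hU.integrable_mul hE
  calc ∫ ω, (U ω - E ω) ^ 2 ∂μ
      = ∫ ω, (U ω ^ 2 + E ω ^ 2 - 2 * (U ω * E ω)) ∂μ := by congr with ω; ring
    _ = ∫ ω, U ω ^ 2 ∂μ + ∫ ω, E ω ^ 2 ∂μ := by
      rw [integral_sub hsq (hUE_int.const_mul 2), integral_add hU.integrable_sq hE.integrable_sq,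
        integral_const_mul, hcross, mul_zero, sub_zero]

section Fintype

variable {ι κ : Type*} [Fintype ι] {X : Ω → ι → ℝ}

lemma memLp_mulVec_apply (hX : MemLp X 2 μ) (G : Matrix κ ι ℝ) (i : κ) :
    MemLp (fun ω => (G *ᵥ X ω) i) 2 μ :=
  show MemLp (fun ω => ∑ j, G i j * X ω j) 2 μ from
    memLp_finsetSum _ fun j _ => (hX.eval j).const_mul (G i j)

lemma integral_mulVec_apply (hX : Integrable X μ) (G : Matrix κ ι ℝ) (i : κ) :
    ∫ ω, (G *ᵥ X ω) i ∂μ = (G *ᵥ ∫ ω, X ω ∂μ) i := by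
  simp only [mulVec, dotProduct, eval_integral hX.eval]
  rw [integral_finsetSum _ fun j _ => (hX.eval j).const_mul _]
  simp_rw [integral_const_mul]

end Fintype

variable {n : ℕ} {X : Ω → Fin n → ℝ}

lemma covMatrix_apply (i j : Fin n) :
    covMatrix μ X i j = cov[fun ω => X ω i, fun ω => X ω j; μ] := rfl

lemma variance_mulVec_apply [IsFiniteMeasure μ] (hX : MemLp X 2 μ) {m : ℕ}
    (G : Matrix (Fin m) (Fin n) ℝ) (i : Fin m) :
    Var[fun ω => (G *ᵥ X ω) i; μ] = (G * covMatrix μ X * Gᵀ) i i := by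
  rw [← covariance_self (memLp_mulVec_apply hX G i).aemeasurable]
  simp only [mulVec, dotProduct]
  rw [covariance_fun_sum_fun_sum (fun j => (hX.eval j).const_mul _)
    (fun j => (hX.eval j).const_mul _)]
  simp only [covariance_const_mul_left, covariance_const_mul_right, mul_apply, transpose_apply,
    Finset.sum_mul, covMatrix_apply]
  rw [Finset.sum_comm]
  exact Finset.sum_congr rfl fun j _ => Finset.sum_congr rfl fun l _ => by ring

variable [IsProbabilityMeasure μ] {m : ℕ} {ε : Ω → Fin m → ℝ}

lemma integral_sq_mulVec_add_sub_apply (hX : MemLp X 2 μ) (hε : MemLp ε 2 μ)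
    (hindep : X ⟂ᵢ[μ] ε) (hmean : ∫ ω, ε ω ∂μ = 0)
    (G : Matrix (Fin m) (Fin n) ℝ) (c : Fin m → ℝ) (i : Fin m) :
    ∫ ω, (G *ᵥ X ω + c - ε ω) i ^ 2 ∂μ
      = (G * covMatrix μ X * Gᵀ) i i + (G *ᵥ (∫ ω, X ω ∂μ) + c) i ^ 2
        + ∫ ω, ε ω i ^ 2 ∂μ := by
  set U : Ω → ℝ := fun ω => (G *ᵥ X ω) i + c i
  have hU : MemLp U 2 μ := (memLp_mulVec_apply hX G i).add (memLp_const _)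
  have hUε : U ⟂ᵢ[μ] (fun ω => ε ω i) :=
    hindep.comp (φ := fun x => (G *ᵥ x) i + c i) (by fun_prop) (measurable_pi_apply i)
  have hε0 : ∫ ω, ε ω i ∂μ = 0 := by
    rw [← eval_integral (hε.integrable one_le_two).eval, hmean, Pi.zero_apply]
  have hUmean : ∫ ω, U ω ∂μ = (G *ᵥ (∫ ω, X ω ∂μ) + c) i := by
    rw [integral_add ((memLp_mulVec_apply hX G i).integrable one_le_two) (integrable_const _),
      integral_mulVec_apply (hX.integrable one_le_two), integral_const]
    simp
  have hUvar : Var[U; μ] = (G * covMatrix μ X * Gᵀ) i i := by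
    rw [variance_add_const (memLp_mulVec_apply hX G i).aestronglyMeasurable,
      variance_mulVec_apply hX]
  calc ∫ ω, (G *ᵥ X ω + c - ε ω) i ^ 2 ∂μ
      = ∫ ω, (U ω - ε ω i) ^ 2 ∂μ := rfl
    _ = ∫ ω, U ω ^ 2 ∂μ + ∫ ω, ε ω i ^ 2 ∂μ := hUε.integral_sub_sq_eq_add hU (hε.eval i) hε0
    _ = _ := by
      rw [← hUvar, variance_eq_sub hU, ← hUmean]
      simp only [Pi.pow_apply]
      ring

lemma integral_sum_sq_mulVec_add_sub_mulVec_add (hX : MemLp X 2 μ) (hε : MemLp ε 2 μ)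
    (hindep : X ⟂ᵢ[μ] ε) (hmean : ∫ ω, ε ω ∂μ = 0) (F A : Matrix (Fin m) (Fin n) ℝ)
    (b : Fin m → ℝ) :
    ∫ ω, ∑ i, (A *ᵥ X ω + b - (F *ᵥ X ω + ε ω)) i ^ 2 ∂μ
      = trace ((A - F) * covMatrix μ X * (A - F)ᵀ) + ∑ i, ((A - F) *ᵥ (∫ ω, X ω ∂μ) + b) i ^ 2
        + ∫ ω, ∑ i, ε ω i ^ 2 ∂μ := by
  have hsplit : ∀ ω, A *ᵥ X ω + b - (F *ᵥ X ω + ε ω) = (A - F) *ᵥ X ω + b - ε ω := fun ω => by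
    rw [sub_mulVec]; abel
  have hint : ∀ i, Integrable (fun ω => ((A - F) *ᵥ X ω + b - ε ω) i ^ 2) μ := fun i =>
    (((memLp_mulVec_apply hX _ i).add (memLp_const (b i))).sub (hε.eval i)).integrable_sq
  simp only [hsplit]
  rw [integral_finsetSum _ fun i _ => hint i,
    integral_finsetSum _ fun i _ => (hε.eval i).integrable_sq, trace, ← Finset.sum_add_distrib,
    ← Finset.sum_add_distrib]
  exact Finset.sum_congr rfl fun i _ => integral_sq_mulVec_add_sub_apply hX hε hindep hmean _ _ i

end Moments

/-- Affine linear forward end-to-end problem: `Â = (F K_X)_r K_X†` together with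
`b̂ = (F − Â) μ_X` minimizes `E‖A X + b − (F X + ε)‖₂²` over `rank(A) ≤ r` and `b`. -/
theorem affine_forward_end_to_end_optimal {Ω : Type} [MeasurableSpace Ω]
    (μ : Measure Ω) [IsProbabilityMeasure μ] {n m k r : ℕ}
    (X : Ω → Fin n → ℝ) (ε : Ω → Fin m → ℝ)
    (hX : MemLp X 2 μ) (hε : MemLp ε 2 μ)
    (hindep : ProbabilityTheory.IndepFun X ε μ)
    (hmean : (∫ ω, ε ω ∂μ) = 0)
    (F : Matrix (Fin m) (Fin n) ℝ)
    (KX : Matrix (Fin n) (Fin k) ℝ) (hKX : covMatrix μ X = KX * KXᵀ)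
    (KXd : Matrix (Fin k) (Fin n) ℝ) (hKXd : IsMoorePenrose KX KXd)
    (M : Matrix (Fin m) (Fin k) ℝ)
    (hMrank : M.rank ≤ r)
    (hMbest : ∀ N : Matrix (Fin m) (Fin k) ℝ, N.rank ≤ r →
      frob (F * KX - M) ≤ frob (F * KX - N)) :
    (M * KXd).rank ≤ r ∧
      ∀ A : Matrix (Fin m) (Fin n) ℝ, A.rank ≤ r → ∀ b : Fin m → ℝ,
        ∫ ω, ∑ i, ((M * KXd) *ᵥ X ω + (F - M * KXd) *ᵥ (∫ ω', X ω' ∂μ)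
              - (F *ᵥ X ω + ε ω)) i ^ 2 ∂μ
          ≤ ∫ ω, ∑ i, (A *ᵥ X ω + b - (F *ᵥ X ω + ε ω)) i ^ 2 ∂μ := by
  obtain ⟨hKKdK, hKdKKd, -, hKdK_symm⟩ := hKXd
  refine ⟨(rank_mul_le_left _ _).trans hMrank, fun A hA b => ?_⟩
  have hKdK_idem : KXd * KX * (KXd * KX) = KXd * KX := by
    rw [← Matrix.mul_assoc, hKdKKd]
  have hresidual : (M * KXd - F) * KX = -((F * KX - M) * (KXd * KX)) := by
    rw [Matrix.sub_mul, Matrix.sub_mul, Matrix.mul_assoc F, ← Matrix.mul_assoc KX, hKKdK,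
      Matrix.mul_assoc, neg_sub]
  have hvar : frob ((M * KXd - F) * KX) ≤ frob ((A - F) * KX) := calc
    frob ((M * KXd - F) * KX) = frob ((F * KX - M) * (KXd * KX)) := by rw [hresidual, frob_neg]
    _ ≤ frob (F * KX - M) := frob_mul_le_of_isSymm_of_idempotent _ hKdK_idem hKdK_symm
    _ ≤ frob (F * KX - A * KX) := hMbest _ ((rank_mul_le_left _ _).trans hA)
    _ = frob ((A - F) * KX) := by rw [← frob_neg, neg_sub, Matrix.sub_mul]
  rw [integral_sum_sq_mulVec_add_sub_mulVec_add hX hε hindep hmean,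
    integral_sum_sq_mulVec_add_sub_mulVec_add hX hε hindep hmean, hKX, ← add_mulVec,
    sub_add_sub_cancel', sub_self, zero_mulVec, ← frob_mul_sq, ← frob_mul_sq]
  simp only [Pi.zero_apply, zero_pow two_ne_zero, Finset.sum_const_zero]
  gcongr ?_ + ?_ + _
  · exact pow_le_pow_left₀ (frob_nonneg _) hvar 2
  · positivity
end

section
/- Let X ∈ ℝ^{n×J} and Y ∈ ℝ^{m×J} be data matrices, and let P_Y = Y† Y denote the orthogonal projection onto the row space of Y. Suppose M is a best rank-≤r approximation of X P_Y in the Frobenius norm. Then Â = M Y† satisfies rank(Â) ≤ r and ‖Â Y − X‖_F ≤ ‖A Y − X‖_F for every A ∈ ℝ^{n×m} with rank(A) ≤ r (the empirical rank-constrained least-squares inverse problem). -/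
open Matrix

/-- Squared Frobenius norm. -/
def frobSq {m n : ℕ} (A : Matrix (Fin m) (Fin n) ℝ) : ℝ :=
  ∑ i, ∑ j, (A i j) ^ 2

lemma frobSq_nonneg {m n : ℕ} (A : Matrix (Fin m) (Fin n) ℝ) : 0 ≤ frobSq A := by
  apply Finset.sum_nonneg; intro i _; apply Finset.sum_nonneg; intro j _; positivity

lemma frob_eq {m n : ℕ} (A : Matrix (Fin m) (Fin n) ℝ) :
    frob A = Real.sqrt (frobSq A) := rfl

lemma frob_le_frob {m n : ℕ} {A B : Matrix (Fin m) (Fin n) ℝ}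
    (h : frobSq A ≤ frobSq B) : frob A ≤ frob B :=
  Real.sqrt_le_sqrt h

lemma frobSq_le_frobSq {m n : ℕ} {A B : Matrix (Fin m) (Fin n) ℝ}
    (h : frob A ≤ frob B) : frobSq A ≤ frobSq B := by
  calc frobSq A = Real.sqrt (frobSq A) ^ 2 := (Real.sq_sqrt (frobSq_nonneg A)).symm
    _ ≤ Real.sqrt (frobSq B) ^ 2 := pow_le_pow_left₀ (Real.sqrt_nonneg _) h 2
    _ = frobSq B := Real.sq_sqrt (frobSq_nonneg B)

lemma inner_trace {m n : ℕ} (A B : Matrix (Fin m) (Fin n) ℝ) :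
    Matrix.trace (A * Bᵀ) = ∑ i, ∑ j, A i j * B i j := by
  simp [Matrix.trace, Matrix.mul_apply, Matrix.diag]

lemma frobSq_add_of_orth {m n : ℕ} {A B : Matrix (Fin m) (Fin n) ℝ}
    (h : A * Bᵀ = 0) : frobSq (A + B) = frobSq A + frobSq B := by
  have ht : Matrix.trace (A * Bᵀ) = 0 := by rw [h]; simp
  rw [inner_trace] at ht
  have : ∀ i j, (A i j + B i j) ^ 2 = A i j ^ 2 + B i j ^ 2 + 2 * (A i j * B i j) := by
    intro i j; ring
  simp only [frobSq, Matrix.add_apply, this, Finset.sum_add_distrib,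
    ← Finset.mul_sum, ht]
  ring

lemma frobSq_neg_sub {m n : ℕ} (A B : Matrix (Fin m) (Fin n) ℝ) :
    frobSq (A - B) = frobSq (B - A) := by
  simp only [frobSq, Matrix.sub_apply]
  congr 1; ext i; congr 1; ext j; ring

/-- Empirical rank-constrained least-squares inverse problem:
`Â = (X Y† Y)_r Y†` minimizes `‖A Y − X‖_F` over `rank(A) ≤ r`. -/
theorem empirical_inverse_optimal {n m J : ℕ} (r : ℕ)
    (X : Matrix (Fin n) (Fin J) ℝ) (Y : Matrix (Fin m) (Fin J) ℝ)
    (Yd : Matrix (Fin J) (Fin m) ℝ) (hYd : IsMoorePenrose Y Yd)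
    (M : Matrix (Fin n) (Fin J) ℝ)
    (hMrank : M.rank ≤ r)
    (hMbest : ∀ N : Matrix (Fin n) (Fin J) ℝ, N.rank ≤ r →
      frob (X * (Yd * Y) - M) ≤ frob (X * (Yd * Y) - N)) :
    (M * Yd).rank ≤ r ∧
      ∀ A : Matrix (Fin n) (Fin m) ℝ, A.rank ≤ r →
        frob (M * Yd * Y - X) ≤ frob (A * Y - X) := by
  obtain ⟨h1, h2, h3, h4⟩ := hYd
  have hPt : (Yd * Y)ᵀ = Yd * Y := h4
  have hP2 : (Yd * Y) * (Yd * Y) = Yd * Y := by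
    rw [← Matrix.mul_assoc, h2]
  have hYP : Y * (Yd * Y) = Y := by
    rw [← Matrix.mul_assoc, h1]
  set P : Matrix (Fin J) (Fin J) ℝ := Yd * Y with hPdef
  -- Pythagoras: for B with B * P = B,
  -- frobSq (B - X) = frobSq (B - X*P) + frobSq (X*P - X)
  have pyth : ∀ B : Matrix (Fin n) (Fin J) ℝ, B * P = B →
      frobSq (B - X) = frobSq (B - X * P) + frobSq (X * P - X) := by
    intro B hB
    have hsplit : B - X = (B - X * P) + (X * P - X) := by abel
    rw [hsplit]
    apply frobSq_add_of_orth
    have ht : (X * P - X)ᵀ = P * Xᵀ - Xᵀ := by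
      rw [Matrix.transpose_sub, Matrix.transpose_mul, hPt]
    rw [ht]
    have e1 : (B - X * P) * (P * Xᵀ) = (B - X * P) * Xᵀ := by
      rw [← Matrix.mul_assoc, Matrix.sub_mul, hB, Matrix.mul_assoc X P P, hP2,
        Matrix.sub_mul]
    rw [Matrix.mul_sub, e1, sub_self]
  -- Contraction: frobSq (N * P) ≤ frobSq N
  have contract : ∀ N : Matrix (Fin n) (Fin J) ℝ, frobSq (N * P) ≤ frobSq N := by
    intro N
    have hsplit : N = N * P + (N - N * P) := by abel
    have horth : (N * P) * (N - N * P)ᵀ = 0 := by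
      rw [Matrix.transpose_sub, Matrix.transpose_mul, hPt, Matrix.mul_sub]
      have : N * P * (P * Nᵀ) = N * P * Nᵀ := by
        rw [← Matrix.mul_assoc, Matrix.mul_assoc N P P, hP2]
      rw [this, Matrix.mul_assoc, sub_self]
    calc frobSq (N * P) ≤ frobSq (N * P) + frobSq (N - N * P) := by
          linarith [frobSq_nonneg (N - N * P)]
      _ = frobSq (N * P + (N - N * P)) := (frobSq_add_of_orth horth).symm
      _ = frobSq N := by rw [← hsplit]
  constructor
  · exact le_trans (Matrix.rank_mul_le_left M Yd) hMrank
  · intro A hA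
    have hMP : M * Yd * Y = M * P := by rw [Matrix.mul_assoc]
    have hAYP : (A * Y) * P = A * Y := by rw [Matrix.mul_assoc, hYP]
    have hMPP : (M * P) * P = M * P := by rw [Matrix.mul_assoc, hP2]
    have hrankAY : (A * Y).rank ≤ r := le_trans (Matrix.rank_mul_le_left A Y) hA
    have key : frobSq (M * P - X * P) ≤ frobSq (A * Y - X * P) := by
      have e1 : (M - X * P) * P = M * P - X * P := by
        rw [Matrix.sub_mul, Matrix.mul_assoc X P P, hP2]
      calc frobSq (M * P - X * P) = frobSq ((M - X * P) * P) := by rw [e1]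
        _ ≤ frobSq (M - X * P) := contract _
        _ = frobSq (X * P - M) := frobSq_neg_sub _ _
        _ ≤ frobSq (X * P - A * Y) := frobSq_le_frobSq (hMbest (A * Y) hrankAY)
        _ = frobSq (A * Y - X * P) := frobSq_neg_sub _ _
    apply frob_le_frob
    rw [hMP, pyth (M * P) hMPP, pyth (A * Y) hAYP]
    linarith
end

section
/- Let X ∈ ℝ^{n×J} and Y ∈ ℝ^{m×J} be data matrices, and let P_X = X† X denote the orthogonal projection onto the row space of X. Suppose M is a best rank-≤r approximation of Y P_X in the Frobenius norm. Then Â = M X† satisfies rank(Â) ≤ r and ‖Â X − Y‖_F ≤ ‖A X − Y‖_F for every A ∈ ℝ^{m×n} with rank(A) ≤ r (the empirical rank-constrained least-squares forward problem). -/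
open Matrix

noncomputable def sn {m n : ℕ} (A : Matrix (Fin m) (Fin n) ℝ) : ℝ :=
  ∑ i, ∑ j, (A i j) ^ 2

lemma sn_nonneg {m n : ℕ} (A : Matrix (Fin m) (Fin n) ℝ) : 0 ≤ sn A := by
  apply Finset.sum_nonneg; intro i _
  apply Finset.sum_nonneg; intro j _
  positivity

lemma frob_eq_sqrt_sn {m n : ℕ} (A : Matrix (Fin m) (Fin n) ℝ) :
    frob A = Real.sqrt (sn A) := rfl

lemma sn_sub_comm {m n : ℕ} (A B : Matrix (Fin m) (Fin n) ℝ) :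
    sn (A - B) = sn (B - A) := by
  unfold sn
  congr 1; ext i; congr 1; ext j
  simp [Matrix.sub_apply]; ring

lemma pyth {m n : ℕ} (U V : Matrix (Fin m) (Fin n) ℝ) (h : U * Vᵀ = 0) :
    sn (U + V) = sn U + sn V := by
  have hc : ∑ i, ∑ j, U i j * V i j = 0 := by
    have := congrArg Matrix.trace h
    simpa [Matrix.trace, Matrix.diag, Matrix.mul_apply] using this
  have expand : sn (U + V) = sn U + sn V + 2 * ∑ i, ∑ j, U i j * V i j := by
    unfold sn
    simp only [Matrix.add_apply, Finset.mul_sum]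
    rw [← Finset.sum_add_distrib, ← Finset.sum_add_distrib]
    congr 1; ext i
    rw [← Finset.sum_add_distrib, ← Finset.sum_add_distrib]
    congr 1; ext j
    ring
  rw [expand, hc]; ring

lemma sn_mul_proj_le {k J : ℕ} (N : Matrix (Fin k) (Fin J) ℝ)
    (P : Matrix (Fin J) (Fin J) ℝ) (hPt : Pᵀ = P) (hP2 : P * P = P) :
    sn (N * P) ≤ sn N := by
  have horth : (N * P) * (N - N * P)ᵀ = 0 := by
    rw [Matrix.transpose_sub, Matrix.transpose_mul, hPt]
    rw [Matrix.mul_sub]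
    have : N * P * (P * Nᵀ) = N * P * Nᵀ := by
      rw [← Matrix.mul_assoc, Matrix.mul_assoc N P P, hP2]
    rw [this, sub_self]
  have := pyth (N * P) (N - N * P) horth
  have hN : N * P + (N - N * P) = N := by abel
  rw [hN] at this
  have := sn_nonneg (N - N * P)
  linarith

/-- Empirical rank-constrained least-squares forward problem:
`Â = (Y X† X)_r X†` minimizes `‖A X − Y‖_F` over `rank(A) ≤ r`. -/
theorem empirical_forward_optimal {n m J : ℕ} (r : ℕ)
    (X : Matrix (Fin n) (Fin J) ℝ) (Y : Matrix (Fin m) (Fin J) ℝ)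
    (Xd : Matrix (Fin J) (Fin n) ℝ) (hXd : IsMoorePenrose X Xd)
    (M : Matrix (Fin m) (Fin J) ℝ)
    (hMrank : M.rank ≤ r)
    (hMbest : ∀ N : Matrix (Fin m) (Fin J) ℝ, N.rank ≤ r →
      frob (Y * (Xd * X) - M) ≤ frob (Y * (Xd * X) - N)) :
    (M * Xd).rank ≤ r ∧
      ∀ A : Matrix (Fin m) (Fin n) ℝ, A.rank ≤ r →
        frob (M * Xd * X - Y) ≤ frob (A * X - Y) := by
  obtain ⟨h1, h2, h3, h4⟩ := hXd
  set P := Xd * X with hP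
  have hPt : Pᵀ = P := h4
  have hP2 : P * P = P := by
    rw [hP, Matrix.mul_assoc Xd X (Xd * X), ← Matrix.mul_assoc X Xd X, h1]
  have hXP : X * P = X := by
    rw [hP, ← Matrix.mul_assoc]; exact h1
  constructor
  · exact le_trans (Matrix.rank_mul_le_left M Xd) hMrank
  intro A hA
  -- Pythagoras for both sides, with V = Y * P - Y
  have key : ∀ B : Matrix (Fin m) (Fin n) ℝ,
      sn (B * X - Y) = sn (B * X - Y * P) + sn (Y * P - Y) := by
    intro B
    have horth : (B * X - Y * P) * (Y * P - Y)ᵀ = 0 := by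
      have hUP : (B * X - Y * P) * P = B * X - Y * P := by
        rw [Matrix.sub_mul, Matrix.mul_assoc B X P, hXP,
          Matrix.mul_assoc Y P P, hP2]
      rw [Matrix.transpose_sub, Matrix.transpose_mul, hPt, Matrix.mul_sub,
        ← Matrix.mul_assoc, hUP, sub_self]
    have := pyth (B * X - Y * P) (Y * P - Y) horth
    have hsum : (B * X - Y * P) + (Y * P - Y) = B * X - Y := by abel
    rw [hsum] at this
    exact this
  -- contraction step: sn (Y*P - M*Xd*X) ≤ sn (Y*P - M)
  have hcontract : sn (M * Xd * X - Y * P) ≤ sn (Y * P - M) := by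
    have heq : (Y * P - M) * P = Y * P - M * Xd * X := by
      rw [Matrix.sub_mul, Matrix.mul_assoc Y P P, hP2, hP, ← Matrix.mul_assoc M Xd X]
    calc sn (M * Xd * X - Y * P) = sn (Y * P - M * Xd * X) := sn_sub_comm _ _
      _ = sn ((Y * P - M) * P) := by rw [heq]
      _ ≤ sn (Y * P - M) := sn_mul_proj_le _ P hPt hP2
  -- best-approximation step
  have hbest : sn (Y * P - M) ≤ sn (Y * P - A * X) := by
    have hAX : (A * X).rank ≤ r := le_trans (Matrix.rank_mul_le_left A X) hA
    have h := hMbest (A * X) hAX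
    rw [frob_eq_sqrt_sn, frob_eq_sqrt_sn] at h
    exact (Real.sqrt_le_sqrt_iff (sn_nonneg _)).mp h
  have hfinal : sn (M * Xd * X - Y) ≤ sn (A * X - Y) := by
    rw [key (M * Xd), key A]
    have : sn (A * X - Y * P) = sn (Y * P - A * X) := sn_sub_comm _ _
    rw [this]
    linarith
  rw [frob_eq_sqrt_sn, frob_eq_sqrt_sn]
  exact Real.sqrt_le_sqrt hfinal
end
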